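/- arXiv:0906.2614 — 3 statements merged into one kernel-verified Lean document; each statement's English description precedes it below -/
import Mathlib

section
/- For every subset X of the Cantor space ℕ → Bool whose outer measure with respect to the uniform measure is zero, there exists a martingale m that wins against every element of X. -/
open Filter MeasureTheory Set
open scoped ENNReal

/-- The first `n` bits of `ω`, i.e. the list `[ω 0, …, ω (n-1)]`. -/
def prefixFn (ω : ℕ → Bool) (n : ℕ) : List Bool := List.ofFn fun i : Fin n => ω i

/-- `α` has limit frequency `p`: the fraction of `true`s among the first `N` terms
tends to `p` as `N → ∞`. -/
def LimitFreq (α : ℕ → Bool) (p : ℝ) : Prop :=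
  Tendsto (fun N => (((Finset.range N).filter fun i => α i = true).card : ℝ) / N)
    atTop (nhds p)

/-- The set of indices `i` such that the selection rule `s` selects the term `ω i`. -/
def SelectedIndices (s : List Bool → Bool) (ω : ℕ → Bool) : Set ℕ :=
  {i | s (prefixFn ω i) = true}

/-- The subsequence selected by `s` from `ω`: the selected terms, in increasing order of
index (meaningful when the selected index set is infinite). -/
noncomputable def SelectedSeq (s : List Bool → Bool) (ω : ℕ → Bool) : ℕ → Bool :=
  fun n => ω (Nat.nth (· ∈ SelectedIndices s ω) n)

/-- Requirement II for the selection rule `s` with limit `p`: the subsequence selected by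
`s` is finite or has limit frequency `p`. -/
def SatisfiesII (s : List Bool → Bool) (ω : ℕ → Bool) (p : ℝ) : Prop :=
  (SelectedIndices s ω).Finite ∨ LimitFreq (SelectedSeq s ω) p

/-- A (non-negative) martingale. -/
def IsMartingale (m : List Bool → ℝ) : Prop :=
  (∀ x, 0 ≤ m x) ∧ ∀ x, m x = (m (x ++ [false]) + m (x ++ [true])) / 2

/-- A (non-negative) supermartingale. -/
def IsSupermartingale (m : List Bool → ℝ) : Prop :=
  (∀ x, 0 ≤ m x) ∧ ∀ x, (m (x ++ [false]) + m (x ++ [true])) / 2 ≤ m x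

/-- `m` wins against `ω`: the values of `m` on the prefixes of `ω` are unbounded. -/
def Wins (m : List Bool → ℝ) (ω : ℕ → Bool) : Prop :=
  ∀ C : ℝ, ∃ n, C < m (prefixFn ω n)

/-- The cylinder of all infinite sequences extending the finite string `w`. -/
def cyl (w : List Bool) : Set (ℕ → Bool) := {ω | prefixFn ω w.length = w}

/-- `μ` is the uniform (fair-coin) measure on Cantor space, i.e. the infinite product
over `ℕ` of the uniform measure on `Bool`; it is characterized by its values on
cylinders: `μ (cyl w) = 2 ^ (- length w)`. -/
def IsUniformMeasure (μ : Measure (ℕ → Bool)) : Prop :=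
  ∀ w : List Bool, μ (cyl w) = ((2 : ℝ≥0∞) ^ w.length)⁻¹

/-- `X` is an effectively null set: some computable `g` produces, for every `k`, a
sequence of (optional) strings whose cylinders cover `X` and whose total measure is at
most `2^(-k)`. -/
def EffNull (X : Set (ℕ → Bool)) : Prop :=
  ∃ g : ℕ → ℕ → Option (List Bool), Computable₂ g ∧
    ∀ k : ℕ,
      (X ⊆ ⋃ n : ℕ, ⋃ w ∈ g k n, cyl w) ∧
      (∑' n : ℕ, ((g k n).elim 0 fun w => ((2 : ℝ≥0∞) ^ w.length)⁻¹)) ≤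
        ((2 : ℝ≥0∞) ^ k)⁻¹

/-- `ω` is Martin-Löf random: it belongs to no effectively null set. -/
def MLRandom (ω : ℕ → Bool) : Prop := ∀ X : Set (ℕ → Bool), EffNull X → ω ∉ X

/-- A canonical `Primcodable` structure on `ℚ`, via its canonical enumeration. -/
instance : Primcodable ℚ := Primcodable.ofEquiv ℕ (Denumerable.eqv ℚ)

/-- `f` is lower semicomputable: it is the pointwise supremum of a computable family of
rationals, nondecreasing in the second argument. -/
def LowerSemicomputableFn (f : List Bool → ℝ) : Prop :=
  ∃ g : List Bool → ℕ → ℚ, Computable₂ g ∧ (∀ x, Monotone fun n => g x n) ∧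
    ∀ x, f x = ⨆ n, ((g x n : ℝ))

/-- `f` is computable: some computable family of rationals approximates it within
`2^(-n)`. -/
def ComputableFn (f : List Bool → ℝ) : Prop :=
  ∃ g : List Bool → ℕ → ℚ, Computable₂ g ∧
    ∀ x n, |((g x n : ℝ)) - f x| ≤ (2 : ℝ) ^ (-(n : ℤ))

/-! Cover the null set `X` by open sets `U k` with `μ (U k) < 2⁻ᵏ`. For each `k`, the
relative density `x ↦ 2 ^ |x| * μ (U k ∩ cyl x)` is a martingale, and it equals `1` on every
string whose cylinder lies inside `U k`; since `U k` is open, that is the case for all long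
enough prefixes of any `ω ∈ U k`. The capitals `μ (U k)` are summable, so the sum over `k` of
these martingales is a martingale, and along any `ω ∈ X` it eventually exceeds every `K`. -/

lemma prefixFn_succ (ω : ℕ → Bool) (n : ℕ) :
    prefixFn ω (n + 1) = prefixFn ω n ++ [ω n] := by
  simp only [prefixFn, List.ofFn_succ', List.concat_eq_append, Fin.val_castSucc, Fin.val_last]

lemma mem_cyl_prefixFn {ω' ω : ℕ → Bool} {n : ℕ} :
    ω' ∈ cyl (prefixFn ω n) ↔ ∀ i < n, ω' i = ω i := by
  simp only [cyl, mem_ofPred_eq, prefixFn, List.length_ofFn, List.ofFn_inj, funext_iff,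
    Fin.forall_iff, Fin.val_cast]

lemma mem_cyl_append {x : List Bool} {b : Bool} {ω : ℕ → Bool} :
    ω ∈ cyl (x ++ [b]) ↔ ω ∈ cyl x ∧ ω x.length = b := by
  simp only [cyl, mem_ofPred_eq, List.length_append, List.length_singleton, prefixFn_succ]
  constructor
  · intro h
    obtain ⟨h1, h2⟩ := List.append_inj' h rfl
    exact ⟨h1, by simpa using h2⟩
  · rintro ⟨h1, h2⟩
    rw [h1, h2]

lemma measurableSet_cyl (w : List Bool) : MeasurableSet (cyl w) := by
  induction w using List.reverseRecOn with
  | nil => simp [cyl, prefixFn]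
  | append_singleton x b ih =>
    have : cyl (x ++ [b]) = cyl x ∩ (fun ω => ω x.length) ⁻¹' {b} := by
      ext ω
      exact mem_cyl_append
    rw [this]
    exact ih.inter (measurable_pi_apply _ (measurableSet_singleton b))

lemma eventually_cyl_prefixFn_subset {U : Set (ℕ → Bool)} (hU : IsOpen U) {ω : ℕ → Bool}
    (hω : ω ∈ U) : ∀ᶠ n in atTop, cyl (prefixFn ω n) ⊆ U := by
  obtain ⟨I, u, hu, hsub⟩ := isOpen_pi_iff.mp hU ω hω
  refine eventually_atTop.mpr ⟨I.sup id + 1, fun n hn ω' hω' => hsub fun i hi => ?_⟩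
  have hin : i < n := Nat.lt_of_lt_of_le (Nat.lt_succ_of_le (Finset.le_sup (f := id) hi)) hn
  rw [mem_cyl_prefixFn.mp hω' i hin]
  exact (hu i hi).2

lemma IsUniformMeasure.isProbabilityMeasure {μ : Measure (ℕ → Bool)} (hμ : IsUniformMeasure μ) :
    IsProbabilityMeasure μ := by
  have huniv : cyl [] = univ := by ext ω; simp [cyl, prefixFn]
  exact ⟨by simpa [huniv] using hμ []⟩

lemma IsMartingale.tsum {m : ℕ → List Bool → ℝ} (hm : ∀ k, IsMartingale (m k))
    (hs : ∀ x, Summable fun k => m k x) : IsMartingale fun x => ∑' k, m k x := by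
  refine ⟨fun x => tsum_nonneg fun k => (hm k).1 x, fun x => ?_⟩
  rw [← (hs _).tsum_add (hs _), ← tsum_div_const]
  exact tsum_congr fun k => (hm k).2 x

lemma wins_tsum_of_eventually_one_le {m : ℕ → List Bool → ℝ} (hm : ∀ k x, 0 ≤ m k x)
    (hs : ∀ x, Summable fun k => m k x) {ω : ℕ → Bool}
    (hω : ∀ k, ∀ᶠ n in atTop, 1 ≤ m k (prefixFn ω n)) : Wins (fun x => ∑' k, m k x) ω := by
  intro C
  obtain ⟨K, hK⟩ := exists_nat_gt C
  obtain ⟨n, hn⟩ := ((Finset.range K).eventually_all.mpr fun k _ => hω k).exists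
  refine ⟨n, hK.trans_le ?_⟩
  calc (K : ℝ) = ∑ _k ∈ Finset.range K, (1 : ℝ) := by simp
    _ ≤ ∑ k ∈ Finset.range K, m k (prefixFn ω n) := Finset.sum_le_sum hn
    _ ≤ ∑' k, m k (prefixFn ω n) := (hs _).sum_le_tsum _ fun k _ => hm k _

lemma exists_isOpen_superset_summable_measureReal {α : Type*} [TopologicalSpace α]
    [MeasurableSpace α] {μ : Measure α} [μ.OuterRegular] {X : Set α} (hX : μ X = 0) :
    ∃ U : ℕ → Set α, (∀ k, X ⊆ U k ∧ IsOpen (U k)) ∧ Summable fun k => μ.real (U k) := by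
  choose U hXU hUopen hUlt using fun k : ℕ =>
    X.exists_isOpen_lt_of_lt ((2⁻¹ : ℝ≥0∞) ^ k) (hX ▸ ENNReal.pow_pos (by norm_num) k)
  refine ⟨U, fun k => ⟨hXU k, hUopen k⟩, ENNReal.summable_toReal (ne_top_of_le_ne_top ?_
    (ENNReal.tsum_le_tsum fun k => (hUlt k).le))⟩
  simp

section CylDensity

variable {μ : Measure (ℕ → Bool)}

/-- For the uniform measure, `cylDensity μ U x` is the conditional probability of `U` given
`cyl x`. -/
noncomputable def cylDensity (μ : Measure (ℕ → Bool)) (U : Set (ℕ → Bool)) (x : List Bool) : ℝ :=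
  μ.real (U ∩ cyl x) * 2 ^ x.length

lemma measure_inter_cyl_eq_add (U : Set (ℕ → Bool)) (x : List Bool) :
    μ (U ∩ cyl x) = μ (U ∩ cyl (x ++ [false])) + μ (U ∩ cyl (x ++ [true])) := by
  rw [← measure_inter_add_sdiff (U ∩ cyl x) (measurableSet_cyl (x ++ [true])), add_comm]
  congr 2 <;> ext ω <;> cases h : ω x.length <;> simp [mem_cyl_append, h]

lemma isMartingale_cylDensity [IsFiniteMeasure μ] (U : Set (ℕ → Bool)) :
    IsMartingale (cylDensity μ U) := by
  refine ⟨fun x => by unfold cylDensity; positivity, fun x => ?_⟩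
  have hsplit : μ.real (U ∩ cyl x)
      = μ.real (U ∩ cyl (x ++ [false])) + μ.real (U ∩ cyl (x ++ [true])) := by
    simp only [measureReal_def, measure_inter_cyl_eq_add U x]
    exact ENNReal.toReal_add (measure_ne_top _ _) (measure_ne_top _ _)
  simp only [cylDensity, List.length_append, List.length_singleton, hsplit]
  ring

lemma cylDensity_le [IsFiniteMeasure μ] (U : Set (ℕ → Bool)) (x : List Bool) :
    cylDensity μ U x ≤ μ.real U * 2 ^ x.length :=
  mul_le_mul_of_nonneg_right (measureReal_mono inter_subset_left) (by positivity)

lemma cylDensity_eq_one (hμ : IsUniformMeasure μ) {U : Set (ℕ → Bool)} {x : List Bool}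
    (hx : cyl x ⊆ U) : cylDensity μ U x = 1 := by
  simp [cylDensity, measureReal_def, inter_eq_self_of_subset_right hx, hμ x]

end CylDensity

/-- For every subset `X` of Cantor space of (outer) uniform measure zero there is a
martingale that wins against every element of `X`. -/
theorem null_set_winning_martingale (μ : Measure (ℕ → Bool)) (hμ : IsUniformMeasure μ)
    (X : Set (ℕ → Bool)) (hX : μ X = 0) :
    ∃ m : List Bool → ℝ, IsMartingale m ∧ ∀ ω ∈ X, Wins m ω := by
  have := hμ.isProbabilityMeasure
  obtain ⟨U, hU, hsum⟩ := exists_isOpen_superset_summable_measureReal hX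
  have hmart : ∀ k, IsMartingale (cylDensity μ (U k)) := fun k => isMartingale_cylDensity _
  have hsummable : ∀ x, Summable fun k => cylDensity μ (U k) x := fun x =>
    (hsum.mul_right _).of_nonneg_of_le (fun k => (hmart k).1 x) fun k => cylDensity_le _ x
  refine ⟨_, IsMartingale.tsum hmart hsummable, fun ω hω => ?_⟩
  refine wins_tsum_of_eventually_one_le (fun k => (hmart k).1) hsummable fun k => ?_
  filter_upwards [eventually_cyl_prefixFn_subset (hU k).2 ((hU k).1 hω)] with n hn
  rw [cylDensity_eq_one hμ hn]
end

section
/- Finite Ville inequality: for every martingale m with m [] = 1, every natural number N, and every real C > 0, the number of strings x ∈ List Bool of length N that have some prefix y with m y ≥ C is at most 2^N / C. -/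
open Filter MeasureTheory Set
open scoped ENNReal

/-! Induction on the length over the binary tree, for supermartingales. If `m` already reaches
`C` at the root, all `2 ^ n` strings are counted and `C ≤ m []`. Otherwise every counted string
is counted, after deleting its first bit `b`, for the shifted supermartingale `m (b :: ·)`, and
the supermartingale inequality at the root averages the two induction bounds. -/

lemma ncard_setOf_length_eq (α : Type*) [Fintype α] (n : ℕ) :
    {l : List α | l.length = n}.ncard = Fintype.card α ^ n := by
  rw [← Nat.card_coe_set_eq]
  exact (Nat.card_eq_fintype_card (α := List.Vector α n)).trans (card_vector n)

lemma IsMartingale.isSupermartingale {m : List Bool → ℝ} (hm : IsMartingale m) :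
    IsSupermartingale m :=
  ⟨hm.1, fun x => (hm.2 x).ge⟩

lemma IsSupermartingale.comp_cons {m : List Bool → ℝ} (hm : IsSupermartingale m) (b : Bool) :
    IsSupermartingale fun y => m (b :: y) :=
  ⟨fun _ => hm.1 _, fun y => hm.2 (b :: y)⟩

def hittingStrings (m : List Bool → ℝ) (C : ℝ) (n : ℕ) : Set (List Bool) :=
  {x | x.length = n ∧ ∃ y, y <+: x ∧ C ≤ m y}

section hittingStrings

variable {m : List Bool → ℝ} {C : ℝ}

lemma hittingStrings_subset (n : ℕ) : hittingStrings m C n ⊆ {x | x.length = n} :=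
  fun _ hx => hx.1

lemma ncard_hittingStrings_le (n : ℕ) : (hittingStrings m C n).ncard ≤ 2 ^ n := by
  simpa [ncard_setOf_length_eq] using
    Set.ncard_le_ncard (hittingStrings_subset n) (List.finite_length_eq Bool n)

lemma hittingStrings_zero_of_lt (hC : m [] < C) : hittingStrings m C 0 = ∅ := by
  refine Set.eq_empty_of_forall_notMem fun x ⟨hlen, y, hyx, hy⟩ => ?_
  rw [List.length_eq_zero_iff.1 hlen, List.prefix_nil] at hyx
  exact (hyx ▸ hC).not_ge hy

lemma hittingStrings_succ_subset (hC : m [] < C) (n : ℕ) :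
    hittingStrings m C (n + 1) ⊆
      List.cons false '' hittingStrings (fun y => m (false :: y)) C n ∪
        List.cons true '' hittingStrings (fun y => m (true :: y)) C n := by
  rintro (_ | ⟨b, x⟩) ⟨hlen, y, hyx, hy⟩
  · simp at hlen
  obtain rfl | ⟨y', rfl, hy'x⟩ := List.prefix_cons_iff.1 hyx
  · exact absurd hy hC.not_ge
  have hx : x ∈ hittingStrings (fun y => m (b :: y)) C n :=
    ⟨by simpa using hlen, y', hy'x, hy⟩
  cases b
  · exact Or.inl ⟨x, hx, rfl⟩
  · exact Or.inr ⟨x, hx, rfl⟩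

lemma ncard_hittingStrings_succ_le (hC : m [] < C) (n : ℕ) :
    (hittingStrings m C (n + 1)).ncard ≤
      (hittingStrings (fun y => m (false :: y)) C n).ncard +
        (hittingStrings (fun y => m (true :: y)) C n).ncard := by
  have hfin : ∀ m' : List Bool → ℝ, (hittingStrings m' C n).Finite := fun _ =>
    (List.finite_length_eq Bool n).subset (hittingStrings_subset n)
  calc (hittingStrings m C (n + 1)).ncard
      ≤ (List.cons false '' hittingStrings (fun y => m (false :: y)) C n ∪
          List.cons true '' hittingStrings (fun y => m (true :: y)) C n).ncard :=
        Set.ncard_le_ncard (hittingStrings_succ_subset hC n)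
          (((hfin _).image _).union ((hfin _).image _))
    _ ≤ _ := Set.ncard_union_le _ _
    _ = _ := by
        rw [Set.ncard_image_of_injective _ List.cons_injective,
          Set.ncard_image_of_injective _ List.cons_injective]

lemma mul_ncard_hittingStrings_le_of_le (hC : 0 < C) (hle : C ≤ m []) (n : ℕ) :
    C * (hittingStrings m C n).ncard ≤ 2 ^ n * m [] :=
  calc C * (hittingStrings m C n).ncard
      ≤ m [] * 2 ^ n :=
        mul_le_mul hle (by exact_mod_cast ncard_hittingStrings_le n) (by positivity)
          (hC.le.trans hle)
    _ = 2 ^ n * m [] := mul_comm _ _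

theorem IsSupermartingale.mul_ncard_hittingStrings_le (hm : IsSupermartingale m) (hC : 0 < C)
    (n : ℕ) : C * (hittingStrings m C n).ncard ≤ 2 ^ n * m [] := by
  induction n generalizing m with
  | zero =>
    rcases le_or_gt C (m []) with hle | hlt
    · exact mul_ncard_hittingStrings_le_of_le hC hle 0
    · simp [hittingStrings_zero_of_lt hlt, hm.1 []]
  | succ n ih =>
    rcases le_or_gt C (m []) with hle | hlt
    · exact mul_ncard_hittingStrings_le_of_le hC hle (n + 1)
    calc C * (hittingStrings m C (n + 1)).ncard
        ≤ C * (hittingStrings (fun y => m (false :: y)) C n).ncard +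
            C * (hittingStrings (fun y => m (true :: y)) C n).ncard := by
          rw [← mul_add]
          gcongr
          exact_mod_cast ncard_hittingStrings_succ_le hlt n
      _ ≤ 2 ^ n * m [false] + 2 ^ n * m [true] :=
          add_le_add (ih (hm.comp_cons false)) (ih (hm.comp_cons true))
      _ = 2 ^ (n + 1) * ((m ([] ++ [false]) + m ([] ++ [true])) / 2) := by
          simp only [List.nil_append]; ring
      _ ≤ 2 ^ (n + 1) * m [] := by gcongr; exact hm.2 []

end hittingStrings

/-- **Finite Ville inequality.** For a martingale with initial capital `1`, the number of
strings of length `N` having a prefix on which the martingale reaches `C > 0` is at most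
`2 ^ N / C`. -/
theorem finite_ville_inequality (m : List Bool → ℝ) (hm : IsMartingale m)
    (hm1 : m [] = 1) (N : ℕ) (C : ℝ) (hC : 0 < C) :
    (({x : List Bool | x.length = N ∧ ∃ y, y <+: x ∧ C ≤ m y}).ncard : ℝ) ≤
      2 ^ N / C := by
  have hbound := hm.isSupermartingale.mul_ncard_hittingStrings_le hC N
  rw [hm1, mul_one] at hbound
  rwa [le_div_iff₀ hC, mul_comm]
end

section
/- For every martingale m there exists a martingale m' such that for every ω : ℕ → Bool, if m wins against ω (i.e., the values of m on the prefixes of ω are unbounded), then m' strongly wins against ω, i.e., m' [ω 0, …, ω (n−1)] tends to +∞ as n → ∞. -/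
open Filter MeasureTheory Set
open scoped ENNReal

/-!
For each `k`, stop betting with `m` as soon as the capital first reaches `2 ^ k`: the stopped
process is again a martingale, and on a sequence against which `m` wins it eventually stays at
least `2 ^ k`. The sum of these stopped martingales weighted by `2⁻¹ ^ k` converges, because each
stopped value is one of the finitely many values of `m` on prefixes of the argument, and on such
a sequence each of its summands is eventually at least `1`.
-/

theorem IsMartingale.const_mul {m : List Bool → ℝ} (hm : IsMartingale m) {c : ℝ} (hc : 0 ≤ c) :
    IsMartingale fun x => c * m x :=
  ⟨fun x => mul_nonneg hc (hm.1 x), fun x => by beta_reduce; rw [hm.2 x]; ring⟩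

theorem isMartingale_tsum {ι : Type*} {M : ι → List Bool → ℝ} (hM : ∀ i, IsMartingale (M i))
    (hsum : ∀ x, Summable fun i => M i x) : IsMartingale fun x => ∑' i, M i x := by
  refine ⟨fun x => tsum_nonneg fun i => (hM i).1 x, fun x => ?_⟩
  rw [← (hsum _).tsum_add (hsum _), ← tsum_div_const]
  exact tsum_congr fun i => (hM i).2 x

theorem tendsto_tsum_atTop_of_eventually_one_le {α : Type*} {l : Filter α} {f : ℕ → α → ℝ}
    (hf : ∀ k a, 0 ≤ f k a) (hsum : ∀ a, Summable fun k => f k a)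
    (h : ∀ k, ∀ᶠ a in l, 1 ≤ f k a) : Tendsto (fun a => ∑' k, f k a) l atTop := by
  refine tendsto_atTop.2 fun b => ?_
  obtain ⟨K, hK⟩ := exists_nat_ge b
  filter_upwards [(eventually_all_finset (Finset.range K)).2 fun k _ => h k] with a ha
  calc b ≤ K := hK
    _ = ∑ k ∈ Finset.range K, (1 : ℝ) := by simp
    _ ≤ ∑ k ∈ Finset.range K, f k a := Finset.sum_le_sum ha
    _ ≤ ∑' k, f k a := (hsum a).sum_le_tsum _ fun k _ => hf k a

theorem prefixFn_take (ω : ℕ → Bool) {j n : ℕ} (h : j ≤ n) :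
    (prefixFn ω n).take j = prefixFn ω j :=
  (Fin.ofFn_take_eq_take_ofFn h _).symm

section StoppedMartingale

open Classical

variable (P : List Bool → Prop) (m : List Bool → ℝ)

noncomputable def stopAt (x : List Bool) : ℝ :=
  if h : ∃ n ≤ x.length, P (x.take n) then m (x.take (Nat.find h)) else m x

theorem exists_stopAt_eq_take (x : List Bool) :
    ∃ j ≤ x.length, stopAt P m x = m (x.take j) := by
  unfold stopAt
  split_ifs with h
  · exact ⟨_, (Nat.find_spec h).1, rfl⟩
  · exact ⟨x.length, le_rfl, by rw [List.take_length]⟩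

theorem stopAt_append_of_exists {x : List Bool} (b : Bool)
    (h : ∃ n ≤ x.length, P (x.take n)) : stopAt P m (x ++ [b]) = stopAt P m x := by
  obtain ⟨hle, hP⟩ := Nat.find_spec h
  have hfirst : Nat.find h ≤ (x ++ [b]).length ∧ P ((x ++ [b]).take (Nat.find h)) :=
    ⟨by simp only [List.length_append, List.length_singleton]; omega,
      by rwa [List.take_append_of_le_length hle]⟩
  have hx : ∃ n ≤ (x ++ [b]).length, P ((x ++ [b]).take n) := ⟨_, hfirst⟩
  have hfind : Nat.find hx = Nat.find h := by
    refine (Nat.find_eq_iff hx).2 ⟨hfirst, fun n hn ⟨_, hPn⟩ => Nat.find_min h hn ?_⟩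
    have hn' : n ≤ x.length := by omega
    exact ⟨hn', by rwa [List.take_append_of_le_length hn'] at hPn⟩
  rw [stopAt, stopAt, dif_pos hx, dif_pos h, hfind, List.take_append_of_le_length hle]

theorem stopAt_append_of_not_exists {x : List Bool} (b : Bool)
    (h : ¬∃ n ≤ x.length, P (x.take n)) : stopAt P m (x ++ [b]) = m (x ++ [b]) := by
  rw [stopAt]
  split_ifs with hx
  · obtain ⟨-, hP⟩ := Nat.find_spec hx
    have hlt : x.length < Nat.find hx := lt_of_not_ge fun hle =>
      h ⟨_, hle, by rwa [List.take_append_of_le_length hle] at hP⟩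
    have hlen : (x ++ [b]).length ≤ Nat.find hx := by simpa using hlt
    rw [List.take_of_length_le hlen]
  · rfl

theorem isMartingale_stopAt {m : List Bool → ℝ} (hm : IsMartingale m) :
    IsMartingale (stopAt P m) := by
  refine ⟨fun x => ?_, fun x => ?_⟩
  · obtain ⟨j, -, hj⟩ := exists_stopAt_eq_take P m x
    exact hj ▸ hm.1 _
  · by_cases h : ∃ n ≤ x.length, P (x.take n)
    · rw [stopAt_append_of_exists P m false h, stopAt_append_of_exists P m true h]
      ring
    · rw [stopAt_append_of_not_exists P m false h, stopAt_append_of_not_exists P m true h,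
        stopAt, dif_neg h]
      exact hm.2 x

theorem stopAt_le_sum_take {m : List Bool → ℝ} (hm : ∀ x, 0 ≤ m x) (x : List Bool) :
    stopAt P m x ≤ ∑ n ∈ Finset.range (x.length + 1), m (x.take n) := by
  obtain ⟨j, hj, hstop⟩ := exists_stopAt_eq_take P m x
  rw [hstop]
  exact Finset.single_le_sum (f := fun n => m (x.take n)) (fun n _ => hm _)
    (Finset.mem_range.2 (Nat.lt_succ_of_le hj))

theorem eventually_le_stopAt_prefixFn {c : ℝ} {ω : ℕ → Bool} {n₀ : ℕ}
    (h : c ≤ m (prefixFn ω n₀)) :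
    ∀ᶠ n in atTop, c ≤ stopAt (fun y => c ≤ m y) m (prefixFn ω n) := by
  filter_upwards [eventually_ge_atTop n₀] with n hn
  have hex : ∃ j ≤ (prefixFn ω n).length, c ≤ m ((prefixFn ω n).take j) :=
    ⟨n₀, by simpa [prefixFn] using hn, by rwa [prefixFn_take ω hn]⟩
  rw [stopAt, dif_pos hex]
  exact (Nat.find_spec hex).2

end StoppedMartingale

/-- For every martingale `m` there is a martingale `m'` that strongly wins (its capital
tends to `+∞`) against every sequence against which `m` wins. -/
theorem wins_to_strong_wins (m : List Bool → ℝ) (hm : IsMartingale m) :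
    ∃ m' : List Bool → ℝ, IsMartingale m' ∧
      ∀ ω : ℕ → Bool, Wins m ω →
        Tendsto (fun n => m' (prefixFn ω n)) atTop atTop := by
  set M : ℕ → List Bool → ℝ := fun k x => 2⁻¹ ^ k * stopAt (fun y => 2 ^ k ≤ m y) m x
  have hM : ∀ k, IsMartingale (M k) := fun k =>
    (isMartingale_stopAt _ hm).const_mul (by positivity)
  have hsum : ∀ x, Summable fun k => M k x := fun x =>
    Summable.of_nonneg_of_le (fun k => (hM k).1 x)
      (fun k => mul_le_mul_of_nonneg_left (stopAt_le_sum_take _ hm.1 x) (by positivity))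
      ((summable_geometric_of_lt_one (by norm_num) (by norm_num)).mul_right _)
  refine ⟨fun x => ∑' k, M k x, isMartingale_tsum hM hsum, fun ω hω => ?_⟩
  refine tendsto_tsum_atTop_of_eventually_one_le (fun k n => (hM k).1 _) (fun n => hsum _)
    fun k => ?_
  obtain ⟨n₀, hn₀⟩ := hω (2 ^ k)
  filter_upwards [eventually_le_stopAt_prefixFn m hn₀.le] with n hn
  calc (1 : ℝ) = 2⁻¹ ^ k * 2 ^ k := by rw [inv_pow, inv_mul_cancel₀ (by positivity)]
    _ ≤ M k (prefixFn ω n) := mul_le_mul_of_nonneg_left hn (by positivity)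
end
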